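/- Let n ≥ 1, let G be a finite type with a distinguished reference element g̃ and depth function δ : G → ℕ with δ(g̃) = 0, let u : G × T → ℝ be a loading function, and let A(t) ⊆ G with g̃ ∈ A(t) for every t ∈ T. Let M be a block configuration of T, let R ⊆ M be such that no two blocks of R are adjacent, and let d ∈ ℕ. Assume that for every block B ∈ M ∖ R there exists g ∈ A_B with δ(g) ≤ d. Then there exists a strategy s : T → G with s(t) ∈ A(t) for all t, such that max_{t∈T} δ(s(t)) ≤ d, #{t ∈ {1,…,n−1} : s(t) ≠ s(t−1)} ≤ |M| − 1, #{t ∈ T : s(t) ≠ g̃} ≤ n − Σ_{B∈R} |B|, and max_{t∈T} u(s(t), t) = LF1(d, M, R). -/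

import Mathlib

open scoped Classical

/-- A block in the horizon `{0,1,…,n-1}`: a nonempty set of consecutive integers
contained in `Finset.range n`. -/
def IsBlock (n : ℕ) (B : Finset ℕ) : Prop :=
  (∃ a b : ℕ, a ≤ b ∧ B = Finset.Icc a b) ∧ B ⊆ Finset.range n

/-- A block configuration of the horizon `{0,1,…,n-1}`: a finite collection of
pairwise disjoint blocks whose union is the whole horizon. -/
def IsBlockConfig (n : ℕ) (M : Finset (Finset ℕ)) : Prop :=
  (∀ B ∈ M, IsBlock n B) ∧
  (M : Set (Finset ℕ)).PairwiseDisjoint id ∧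
  M.sup id = Finset.range n

/-- `B` immediately precedes `B'`. -/
def Precedes (B B' : Finset ℕ) : Prop :=
  ∃ t ∈ B, (∀ u ∈ B, u ≤ t) ∧ (t + 1) ∈ B' ∧ (∀ u ∈ B', t + 1 ≤ u)

/-- Two blocks are adjacent if the end point of one immediately precedes the start
point of the other. -/
def AdjBlocks (B B' : Finset ℕ) : Prop := Precedes B B' ∨ Precedes B' B

/-- `LF₁(B, d)`: the best achievable worst-case loading on block `B` using a
topology available throughout `B` (i.e. in `A_B = ∩_{t∈B} A t`) of depth at most
`d`, computed in the extended reals (`+∞` if no such topology exists, and the inner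
maximum over an empty block is `−∞`). -/
noncomputable def blockLF {G : Type*} [Fintype G] (u : G → ℕ → ℝ) (A : ℕ → Finset G)
    (δ : G → ℕ) (d : ℕ) (B : Finset ℕ) : EReal :=
  (Finset.univ.filter (fun g : G => (∀ t ∈ B, g ∈ A t) ∧ δ g ≤ d)).inf
    (fun g => B.sup (fun t => ((u g t : ℝ) : EReal)))

/-- Worst-case loading of the reference topology `gref` over block `B`. -/
noncomputable def refLF {G : Type*} (u : G → ℕ → ℝ) (gref : G) (B : Finset ℕ) : EReal :=
  B.sup (fun t => ((u gref t : ℝ) : EReal))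

/-- `LF₁(d, M, R)`: the best achievable worst-case loading for block configuration
`M` with reference-block assignment `R ⊆ M`, depth bound `d`, computed in the
extended reals (minimum over an empty set is `+∞`, maximum over an empty collection
is `−∞`). -/
noncomputable def LF1 {G : Type*} [Fintype G] (u : G → ℕ → ℝ) (A : ℕ → Finset G)
    (δ : G → ℕ) (gref : G) (d : ℕ) (M R : Finset (Finset ℕ)) : EReal :=
  max ((M \ R).sup (blockLF u A δ d)) (R.sup (refLF u gref))

/-!
Use `gref` on every block of `R` and, on every other block `B`, a feasible topology that
attains the minimum defining `LF₁(B, d)`. The resulting strategy is constant on blocks, so it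
switches only at block boundaries, it leaves `gref` only outside the blocks of `R`, and since
the blocks partition the horizon its worst-case loading splits blockwise into exactly the terms
of `LF₁(d, M, R)`.
-/

open Finset

namespace IsBlockConfig

variable {n : ℕ} {M : Finset (Finset ℕ)}

theorem subset_range (hM : IsBlockConfig n M) {B : Finset ℕ} (hB : B ∈ M) :
    B ⊆ range n :=
  (hM.1 B hB).2

theorem exists_mem (hM : IsBlockConfig n M) {t : ℕ} (ht : t ∈ range n) :
    ∃ B ∈ M, t ∈ B := by
  rw [← hM.2.2] at ht
  simpa only [mem_sup, id_eq] using ht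

theorem forall_mem_range (hM : IsBlockConfig n M) {P : ℕ → Prop}
    (hP : ∀ B ∈ M, ∀ t ∈ B, P t) : ∀ t ∈ range n, P t := fun t ht => by
  obtain ⟨B, hB, htB⟩ := hM.exists_mem ht
  exact hP B hB t htB

theorem eq_of_mem_of_mem (hM : IsBlockConfig n M) {B B' : Finset ℕ} (hB : B ∈ M)
    (hB' : B' ∈ M) {t : ℕ} (ht : t ∈ B) (ht' : t ∈ B') : B = B' := by
  by_contra hne
  exact disjoint_left.1 (hM.2.1 hB hB' hne) ht ht'

theorem exists_forall_mem_eq {α : Type*} (hM : IsBlockConfig n M) (g : Finset ℕ → α) :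
    ∃ s : ℕ → α, ∀ B ∈ M, ∀ t ∈ B, s t = g B := by
  refine ⟨fun t => if h : ∃ B ∈ M, t ∈ B then g h.choose else g ∅, fun B hB t ht => ?_⟩
  have h : ∃ B ∈ M, t ∈ B := ⟨B, hB, ht⟩
  dsimp only
  rw [dif_pos h, hM.eq_of_mem_of_mem h.choose_spec.1 hB h.choose_spec.2 ht]

theorem sup_range_eq {β : Type*} [SemilatticeSup β] [OrderBot β] (hM : IsBlockConfig n M)
    (f : ℕ → β) : (range n).sup f = M.sup (fun B => B.sup f) := by
  rw [← hM.2.2, sup_eq_biUnion, sup_biUnion]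
  rfl

/-- A strategy that is constant on every block can only switch at the left end point of a
block other than the one containing `0`. -/
theorem card_switches_le {α : Type*} (hM : IsBlockConfig n M) {s : ℕ → α}
    {g : Finset ℕ → α} (hs : ∀ B ∈ M, ∀ t ∈ B, s t = g B) :
    #{t ∈ Icc 1 (n - 1) | s t ≠ s (t - 1)} ≤ #M - 1 := by
  rcases Nat.eq_zero_or_pos n with rfl | hn
  · simp
  obtain ⟨B₀, hB₀, h0⟩ := hM.exists_mem (mem_range.2 hn)
  have hstart : ∀ t ∈ {t ∈ Icc 1 (n - 1) | s t ≠ s (t - 1)},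
      ∃ B ∈ M.erase B₀, t ∈ B ∧ ∀ x ∈ B, t ≤ x := by
    intro t ht
    simp only [mem_filter, mem_Icc] at ht
    obtain ⟨⟨ht1, htn⟩, hswitch⟩ := ht
    obtain ⟨B, hB, htB⟩ := hM.exists_mem (t := t) (mem_range.2 (by omega))
    obtain ⟨⟨a, b, -, rfl⟩, -⟩ := hM.1 _ hB
    have hpred : t - 1 ∉ Icc a b := fun h => hswitch (by rw [hs _ hB t htB, hs _ hB _ h])
    rw [mem_Icc] at htB hpred
    have hat : a = t := by omega
    refine ⟨Icc a b, mem_erase.2 ⟨?_, hB⟩, mem_Icc.2 htB, fun x hx => ?_⟩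
    · rintro rfl
      rw [mem_Icc] at h0
      omega
    · rw [mem_Icc] at hx
      omega
  choose! blk hblk using hstart
  have hinj : Set.InjOn blk ({t ∈ Icc 1 (n - 1) | s t ≠ s (t - 1)} : Finset ℕ) := by
    intro t ht t' ht' h
    obtain ⟨-, htB, hleft⟩ := hblk t ht
    obtain ⟨-, htB', hleft'⟩ := hblk t' ht'
    exact le_antisymm (hleft t' (h ▸ htB')) (hleft' t (h ▸ htB))
  calc #{t ∈ Icc 1 (n - 1) | s t ≠ s (t - 1)}
      ≤ #(M.erase B₀) := card_le_card_of_injOn blk (fun t ht => (hblk t ht).1) hinj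
    _ = #M - 1 := card_erase_of_mem hB₀

theorem card_filter_ne_le {α : Type*} (hM : IsBlockConfig n M) {R : Finset (Finset ℕ)}
    (hR : R ⊆ M) {s : ℕ → α} {a : α} (hs : ∀ B ∈ R, ∀ t ∈ B, s t = a) :
    #{t ∈ range n | s t ≠ a} ≤ n - ∑ B ∈ R, #B := by
  have hsub : {t ∈ range n | s t ≠ a} ⊆ range n \ R.biUnion id := by
    intro t ht
    rw [mem_filter] at ht
    refine mem_sdiff.2 ⟨ht.1, fun htR => ?_⟩
    obtain ⟨B, hB, htB⟩ := mem_biUnion.1 htR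
    exact ht.2 (hs B hB t htB)
  have hRsub : R.biUnion id ⊆ range n := biUnion_subset.2 fun B hB => hM.subset_range (hR hB)
  have hcard : #(R.biUnion id) = ∑ B ∈ R, #B :=
    card_biUnion fun B hB B' hB' => hM.2.1 (hR hB) (hR hB')
  calc #{t ∈ range n | s t ≠ a}
      ≤ #(range n \ R.biUnion id) := card_le_card hsub
    _ = n - ∑ B ∈ R, #B := by rw [card_sdiff_of_subset hRsub, card_range, hcard]

end IsBlockConfig

theorem exists_blockLF_eq {G : Type*} [Fintype G] (u : G → ℕ → ℝ) (A : ℕ → Finset G)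
    (δ : G → ℕ) (d : ℕ) {B : Finset ℕ} (hfeas : ∃ g : G, (∀ t ∈ B, g ∈ A t) ∧ δ g ≤ d) :
    ∃ g : G, ((∀ t ∈ B, g ∈ A t) ∧ δ g ≤ d) ∧
      blockLF u A δ d B = B.sup (fun t => ((u g t : ℝ) : EReal)) := by
  obtain ⟨g₀, hg₀⟩ := hfeas
  obtain ⟨g, hg, hmin⟩ := exists_mem_eq_inf (univ.filter fun g : G => (∀ t ∈ B, g ∈ A t) ∧ δ g ≤ d) ⟨g₀, mem_filter.2 ⟨mem_univ _, hg₀⟩⟩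
    (fun g => B.sup (fun t => ((u g t : ℝ) : EReal)))
  exact ⟨g, (mem_filter.1 hg).2, hmin⟩

theorem exists_strategy_attaining_LF1_general {G : Type*} [Fintype G] (n : ℕ)
    (gref : G) (δ : G → ℕ) (hδ : δ gref = 0) (u : G → ℕ → ℝ)
    (A : ℕ → Finset G) (hA : ∀ t ∈ Finset.range n, gref ∈ A t)
    (M : Finset (Finset ℕ)) (hM : IsBlockConfig n M)
    (R : Finset (Finset ℕ)) (hR : R ⊆ M)
    (d : ℕ)
    (hfeas : ∀ B ∈ M \ R, ∃ g : G, (∀ t ∈ B, g ∈ A t) ∧ δ g ≤ d) :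
    ∃ s : ℕ → G, (∀ t ∈ Finset.range n, s t ∈ A t) ∧
      (Finset.range n).sup (fun t => δ (s t)) ≤ d ∧
      ((Finset.Icc 1 (n - 1)).filter (fun t => s t ≠ s (t - 1))).card ≤ M.card - 1 ∧
      ((Finset.range n).filter (fun t => s t ≠ gref)).card ≤ n - ∑ B ∈ R, B.card ∧
      (Finset.range n).sup (fun t => ((u (s t) t : ℝ) : EReal))
        = LF1 u A δ gref d M R := by
  have : Nonempty G := ⟨gref⟩
  choose! gbest hgbest hgbest_eq using fun B hB => exists_blockLF_eq u A δ d (hfeas B hB)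
  obtain ⟨s, hs⟩ := hM.exists_forall_mem_eq fun B => if B ∈ R then gref else gbest B
  have hsR : ∀ B ∈ R, ∀ t ∈ B, s t = gref := fun B hB t ht => by
    rw [hs B (hR hB) t ht, if_pos hB]
  have hsMR : ∀ B ∈ M \ R, ∀ t ∈ B, s t = gbest B := fun B hB t ht => by
    rw [hs B (mem_sdiff.1 hB).1 t ht, if_neg (mem_sdiff.1 hB).2]
  have hadmissible : ∀ B ∈ M, ∀ t ∈ B, s t ∈ A t ∧ δ (s t) ≤ d := fun B hB t ht => by
    by_cases hBR : B ∈ R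
    · rw [hsR B hBR t ht, hδ]
      exact ⟨hA t (hM.subset_range hB ht), Nat.zero_le d⟩
    · have hB' : B ∈ M \ R := mem_sdiff.2 ⟨hB, hBR⟩
      rw [hsMR B hB' t ht]
      exact ⟨(hgbest B hB').1 t ht, (hgbest B hB').2⟩
  have hsplit : ∀ F : Finset ℕ → EReal, M.sup F = max ((M \ R).sup F) (R.sup F) := fun F => by
    rw [← sup_union, sdiff_union_of_subset hR]
  refine ⟨s, hM.forall_mem_range fun B hB t ht => (hadmissible B hB t ht).1,
    Finset.sup_le (hM.forall_mem_range fun B hB t ht => (hadmissible B hB t ht).2),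
    hM.card_switches_le hs, hM.card_filter_ne_le hR hsR, ?_⟩
  rw [hM.sup_range_eq, hsplit, LF1]
  congr 1
  · refine sup_congr rfl fun B hB => ?_
    rw [hgbest_eq B hB]
    exact sup_congr rfl fun t ht => by rw [hsMR B hB t ht]
  · exact sup_congr rfl fun B hB => sup_congr rfl fun t ht => by rw [hsR B hB t ht]

/-- Given a block configuration `M`, a non-adjacent reference assignment `R ⊆ M`,
and a depth bound `d` such that every non-reference block admits an available
topology of depth at most `d`, there exists a strategy `s` (with `s t ∈ A t` for
all `t`) of maximal depth at most `d`, at most `|M| − 1` switching time steps, at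
most `n − Σ_{B∈R} |B|` time steps outside the reference topology, and whose
worst-case loading `max_{t∈T} u(s t, t)` equals `LF₁(d, M, R)`. -/
theorem exists_strategy_attaining_LF1 {G : Type*} [Fintype G] (n : ℕ) (hn : 1 ≤ n)
    (gref : G) (δ : G → ℕ) (hδ : δ gref = 0) (u : G → ℕ → ℝ)
    (A : ℕ → Finset G) (hA : ∀ t ∈ Finset.range n, gref ∈ A t)
    (M : Finset (Finset ℕ)) (hM : IsBlockConfig n M)
    (R : Finset (Finset ℕ)) (hR : R ⊆ M)
    (hRadj : ∀ B ∈ R, ∀ B' ∈ R, ¬ AdjBlocks B B')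
    (d : ℕ)
    (hfeas : ∀ B ∈ M \ R, ∃ g : G, (∀ t ∈ B, g ∈ A t) ∧ δ g ≤ d) :
    ∃ s : ℕ → G, (∀ t ∈ Finset.range n, s t ∈ A t) ∧
      (Finset.range n).sup (fun t => δ (s t)) ≤ d ∧
      ((Finset.Icc 1 (n - 1)).filter (fun t => s t ≠ s (t - 1))).card ≤ M.card - 1 ∧
      ((Finset.range n).filter (fun t => s t ≠ gref)).card ≤ n - ∑ B ∈ R, B.card ∧
      (Finset.range n).sup (fun t => ((u (s t) t : ℝ) : EReal))
        = LF1 u A δ gref d M R :=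
  exists_strategy_attaining_LF1_general n gref δ hδ u A hA M hM R hR d hfeas
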